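/- arXiv:1405.2875 — 4 statements merged into one kernel-verified Lean document; each statement's English description precedes it below -/
import Mathlib

section
/- Let $e, e'$ be effort levels for a worker of type $i$ with cost function $c_i$ and production function $f_i$ (with cumulative version $F_i(\pi|e)=\sum_{\pi'\ge\pi} f_i(\pi'|e)$). Suppose contracts $x, x'$ (given in increment representation as vectors $\vec{x},\vec{x}'\in[0,1]^m$) satisfy $\vec{x}'\succeq\vec{x}$ pointwise. If $e$ is a utility-maximizing effort level for contract $x$ and $e'$ is a utility-maximizing effort level for contract $x'$ (with consistent tie-breaking), then it is not the case that $e$ has strict first-order stochastic dominance over $e'$, i.e., it cannot hold that $F_i(\pi|e)\ge F_i(\pi|e')$ for all outcomes $\pi$ with strict inequality for some $\pi$. -/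
/-- If `e` maximizes worker utility under contract `x` and `e'` maximizes it
under contract `x'` with `x' ⪰ x` pointwise (increment representation), then under
consistent tie-breaking, `e` does not have strict first-order stochastic dominance
over `e'`. -/
theorem stmt0 {m : ℕ} {E : Type*} (F : E → Fin m → ℝ) (c : E → ℝ)
    (x x' : Fin m → ℝ)
    (hx : ∀ i, x i ∈ Set.Icc (0 : ℝ) 1) (hx' : ∀ i, x' i ∈ Set.Icc (0 : ℝ) 1)
    (hdom : ∀ i, x i ≤ x' i)
    (e e' : E)
    (he : ∀ e₂ : E, ∑ i, x i * F e₂ i - c e₂ ≤ ∑ i, x i * F e i - c e)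
    (he' : ∀ e₂ : E, ∑ i, x' i * F e₂ i - c e₂ ≤ ∑ i, x' i * F e' i - c e')
    (htie : (∑ i, x i * F e i - c e = ∑ i, x i * F e' i - c e') →
            (∑ i, x' i * F e i - c e = ∑ i, x' i * F e' i - c e') → e = e') :
    ¬ ((∀ π, F e' π ≤ F e π) ∧ (∃ π, F e' π < F e π)) := by
  rintro ⟨hle, π, hlt⟩
  have hA := he e'
  have hB := he' e
  have hS : ∑ i, (x' i - x i) * (F e i - F e' i) =
      (∑ i, x' i * F e i - ∑ i, x' i * F e' i) - (∑ i, x i * F e i - ∑ i, x i * F e' i) := by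
    rw [← Finset.sum_sub_distrib, ← Finset.sum_sub_distrib, ← Finset.sum_sub_distrib]
    apply Finset.sum_congr rfl
    intro i _
    ring
  have hnn : 0 ≤ ∑ i, (x' i - x i) * (F e i - F e' i) :=
    Finset.sum_nonneg fun i _ => mul_nonneg (by linarith [hdom i]) (by linarith [hle i])
  have h1 : ∑ i, x i * F e i - c e = ∑ i, x i * F e' i - c e' := by linarith
  have h2 : ∑ i, x' i * F e i - c e = ∑ i, x' i * F e' i - c e' := by linarith
  have := htie h1 h2
  subst this
  exact lt_irrefl _ hlt
end

section
/- Suppose worker types satisfy the FOSD assumption and consistent tie-breaking. For weakly bounded contracts $x, x'$ with increment representations satisfying $\vec{x}'\succeq\vec{x}$ pointwise, the expected value to the requester and the expected payment are both monotone: $V(x')\ge V(x)$ and $P(x')\ge P(x)$. -/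
/-- Under the FOSD assumption and consistent tie-breaking, for weakly bounded
contracts `x ⪯ x'` (pointwise in increment representation), the expected value `V` and
expected payment `P` (expectation over a fixed finite distribution of worker types,
each worker choosing a utility-maximizing effort) are monotone:
`V(x') ≥ V(x)` and `P(x') ≥ P(x)`. -/
theorem stmt1 {m : ℕ} {W E : Type*} [Fintype W]
    (μ : W → ℝ) (hμ : ∀ w, 0 ≤ μ w)
    (F : W → E → Fin m → ℝ) (hF : ∀ w e i, 0 ≤ F w e i)
    (c : W → E → ℝ)
    (v : Fin m → ℝ) (hv : ∀ i, 0 ≤ v i)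
    (eff : W → (Fin m → ℝ) → E)
    (x x' : Fin m → ℝ)
    (hx : ∀ i, x i ∈ Set.Icc (0 : ℝ) 1) (hx' : ∀ i, x' i ∈ Set.Icc (0 : ℝ) 1)
    (hdom : ∀ i, x i ≤ x' i)
    -- each worker's chosen effort maximizes her expected utility
    (hopt : ∀ w (y : Fin m → ℝ), (∀ i, y i ∈ Set.Icc (0 : ℝ) 1) → ∀ e₂ : E,
      ∑ i, y i * F w e₂ i - c w e₂ ≤ ∑ i, y i * F w (eff w y) i - c w (eff w y))
    -- FOSD assumption: any two distinct effort levels are strictly FOSD-comparable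
    (hFOSD : ∀ w (e e' : E), e ≠ e' →
      ((∀ π, F w e' π ≤ F w e π) ∧ ∃ π, F w e' π < F w e π) ∨
      ((∀ π, F w e π ≤ F w e' π) ∧ ∃ π, F w e π < F w e' π))
    -- consistent tie-breaking
    (htie : ∀ w,
      (∑ i, x i * F w (eff w x) i - c w (eff w x)
        = ∑ i, x i * F w (eff w x') i - c w (eff w x')) →
      (∑ i, x' i * F w (eff w x) i - c w (eff w x)
        = ∑ i, x' i * F w (eff w x') i - c w (eff w x')) →
      eff w x = eff w x') :
    (∑ w, μ w * ∑ i, v i * F w (eff w x) i ≤ ∑ w, μ w * ∑ i, v i * F w (eff w x') i) ∧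
    (∑ w, μ w * ∑ i, x i * F w (eff w x) i ≤ ∑ w, μ w * ∑ i, x' i * F w (eff w x') i) := by

  have hkey : ∀ w i, F w (eff w x) i ≤ F w (eff w x') i := by
    intro w i
    by_cases h : eff w x = eff w x'
    · rw [h]
    · rcases hFOSD w (eff w x) (eff w x') h with ⟨hle, π, hlt⟩ | ⟨hle, _⟩
      · exfalso
        have A := hopt w x hx (eff w x')
        have B := hopt w x' hx' (eff w x)
        have hD : ∑ i, (x' i - x i) * (F w (eff w x') i - F w (eff w x) i) ≤ 0 :=
          Finset.sum_nonpos (fun i _ =>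
            mul_nonpos_of_nonneg_of_nonpos (by linarith [hdom i]) (by linarith [hle i]))
        have expand : ∑ i, (x' i - x i) * (F w (eff w x') i - F w (eff w x) i)
            = (∑ i, x' i * F w (eff w x') i) - (∑ i, x' i * F w (eff w x) i)
              - (∑ i, x i * F w (eff w x') i) + (∑ i, x i * F w (eff w x) i) := by
          rw [← Finset.sum_sub_distrib, ← Finset.sum_sub_distrib, ← Finset.sum_add_distrib]
          exact Finset.sum_congr rfl (fun i _ => by ring)
        have eq1 : ∑ i, x i * F w (eff w x) i - c w (eff w x)
            = ∑ i, x i * F w (eff w x') i - c w (eff w x') := by linarith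
        have eq2 : ∑ i, x' i * F w (eff w x) i - c w (eff w x)
            = ∑ i, x' i * F w (eff w x') i - c w (eff w x') := by linarith
        exact h (htie w eq1 eq2)
      · exact hle i
  constructor
  · refine Finset.sum_le_sum (fun w _ => mul_le_mul_of_nonneg_left ?_ (hμ w))
    exact Finset.sum_le_sum (fun i _ =>
      mul_le_mul_of_nonneg_left (hkey w i) (hv i))
  · refine Finset.sum_le_sum (fun w _ => mul_le_mul_of_nonneg_left ?_ (hμ w))
    refine Finset.sum_le_sum (fun i _ => ?_)
    exact mul_le_mul (hdom i) (hkey w i) (hF w (eff w x) i) (le_trans (hx i).1 (hdom i))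
end

section
/- For each feasible cell $C\in\mathcal{F}_\varepsilon(Y)$ (a feasible composite cell of virtual width at least $\varepsilon$ overlapping a set $Y$), there exists an $\varepsilon$-minimal cell contained in $C$; and for each $\varepsilon$-minimal cell $C'$, there are at most $\lceil \log_2(1/\psi)\rceil$ cells $C\in\mathcal{F}_\varepsilon(Y)$ containing $C'$, where $\psi$ is the smallest side length of a feasible cell. Consequently $N_\varepsilon(Y) \le \lceil \log_2(1/\psi)\rceil \cdot N^{\min}_\varepsilon(Y)$, where $N_\varepsilon(Y)=|\mathcal{F}_\varepsilon(Y)|$ and $N^{\min}_\varepsilon(Y)$ is the minimum number of $\varepsilon$-minimal cells needed to cover $Y$. -/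
/-!
Strict containment at least doubles the side length, so a chain of `k` cells whose sides lie in
`[2ψ, 1]` satisfies `2 ^ (k - 1) · 2ψ ≤ 1`, i.e. `k ≤ log₂ (1/ψ)`. The cells of `Fε` above a
fixed minimal cell form such a chain, which gives the bound on each fibre; summing over a
covering family of minimal cells gives the bound on `|Fε|`. Existence of minimal cells below a
given one is just finiteness of `Fall`.
-/

open Finset

section DoublingChain

variable {α : Type*} [PartialOrder α] {s : α → ℝ}

theorem two_pow_card_mul_le_of_isChain {S : Finset α} (hS : IsChain (· ≤ ·) (S : Set α))
    (hdouble : ∀ a ∈ S, ∀ b ∈ S, a < b → 2 * s a ≤ s b) {c d : ℝ}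
    (hc : ∀ a ∈ S, c ≤ s a) (hd : ∀ a ∈ S, s a ≤ d) (hne : S.Nonempty) :
    2 ^ #S * c ≤ 2 * d := by
  classical
  induction hn : #S generalizing S c with
  | zero => exact absurd hn (card_pos.mpr hne).ne'
  | succ n ih =>
    obtain ⟨m, hmin⟩ := S.exists_minimal hne
    have hm_lt : ∀ a ∈ S.erase m, m < a := fun a ha =>
      lt_of_le_of_ne
        ((hS.total hmin.prop (mem_of_mem_erase ha)).resolve_right
          fun hle => ne_of_mem_erase ha (hmin.eq_of_le (mem_of_mem_erase ha) hle))
        (ne_of_mem_erase ha).symm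
    rcases (S.erase m).eq_empty_or_nonempty with hempty | hrest
    · have hn0 : n = 0 := by
        simpa [card_erase_of_mem hmin.prop, hn] using congrArg card hempty
      subst hn0
      rw [zero_add, pow_one]
      linarith [hc m hmin.prop, hd m hmin.prop]
    · have hrest_lb : ∀ a ∈ S.erase m, 2 * c ≤ s a := fun a ha => by
        linarith [hc m hmin.prop, hdouble m hmin.prop a (mem_of_mem_erase ha) (hm_lt a ha)]
      have := ih (hS.mono (erase_subset m S))
        (fun a ha b hb => hdouble a (mem_of_mem_erase ha) b (mem_of_mem_erase hb))
        hrest_lb (fun a ha => hd a (mem_of_mem_erase ha)) hrest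
        (by simp [card_erase_of_mem hmin.prop, hn])
      calc 2 ^ (n + 1) * c = 2 ^ n * (2 * c) := by ring
        _ ≤ 2 * d := this

theorem card_le_ceil_logb_of_isChain {S : Finset α} (hS : IsChain (· ≤ ·) (S : Set α))
    (hdouble : ∀ a ∈ S, ∀ b ∈ S, a < b → 2 * s a ≤ s b) {ψ : ℝ} (hψ : 0 < ψ)
    (hside : ∀ a ∈ S, 2 * ψ ≤ s a ∧ s a ≤ 1) :
    #S ≤ ⌈Real.logb 2 ψ⁻¹⌉₊ := by
  rcases S.eq_empty_or_nonempty with rfl | hne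
  · simp
  have hpow : (2 : ℝ) ^ #S * (2 * ψ) ≤ 2 * 1 :=
    two_pow_card_mul_le_of_isChain hS hdouble (fun a ha => (hside a ha).1)
      (fun a ha => (hside a ha).2) hne
  have hle : (2 : ℝ) ^ (#S : ℝ) ≤ ψ⁻¹ := by
    rw [Real.rpow_natCast, le_inv_comm₀ (by positivity) hψ, inv_eq_one_div,
      le_div_iff₀ (by positivity)]
    linarith
  exact_mod_cast ((Real.le_logb_iff_rpow_le one_lt_two (inv_pos.mpr hψ)).mpr hle).trans
    (Nat.le_ceil _)

end DoublingChain

theorem stmt3_general {α : Type*} [PartialOrder α] [DecidableEq α] [DecidableRel ((· ≤ ·) : α → α → Prop)] (s : α → ℝ) (ψ : ℝ)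
    (hψ : 0 < ψ)
    (Fall Fε : Finset α) (hsub : Fε ⊆ Fall)
    (hside : ∀ C ∈ Fε, 2 * ψ ≤ s C ∧ s C ≤ 1)
    (hhalf : ∀ C C' : α, C < C' → 2 * s C ≤ s C')
    (hchain : ∀ C' : α, IsChain (· ≤ ·) {C : α | C ∈ Fε ∧ C' ≤ C}) :
    (∀ C ∈ Fε, ∃ C' ∈ Fall, (∀ D ∈ Fall, D ≤ C' → D = C') ∧ C' ≤ C) ∧
    (∀ C' ∈ Fall, (∀ D ∈ Fall, D ≤ C' → D = C') →
      ((Fε.filter (fun C => C' ≤ C)).card : ℝ) ≤ ⌈Real.logb 2 ψ⁻¹⌉₊) ∧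
    (∀ Min : Finset α,
      (∀ C' ∈ Min, C' ∈ Fall ∧ ∀ D ∈ Fall, D ≤ C' → D = C') →
      (∀ C ∈ Fε, ∃ C' ∈ Min, C' ≤ C) →
      (Fε.card : ℝ) ≤ (⌈Real.logb 2 ψ⁻¹⌉₊ : ℝ) * Min.card) := by
  have fibre_card_le (C' : α) : #(Fε.filter (C' ≤ ·)) ≤ ⌈Real.logb 2 ψ⁻¹⌉₊ :=
    card_le_ceil_logb_of_isChain (by simpa using hchain C') (fun a _ b _ => hhalf a b) hψ
      (fun a ha => hside a (mem_of_mem_filter a ha))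
  refine ⟨fun C hC => ?_, fun C' _ _ => by exact_mod_cast fibre_card_le C',
    fun Min _ hcov => ?_⟩
  · obtain ⟨C', hC'C, hmin⟩ := Fall.exists_le_minimal (hsub hC)
    exact ⟨C', hmin.prop, fun D hD hDC' => hmin.eq_of_le hD hDC', hC'C⟩
  · have hcover : Fε ⊆ Min.biUnion (fun C' => Fε.filter (C' ≤ ·)) := fun C hC => by
      obtain ⟨C', hC', hle⟩ := hcov C hC
      exact mem_biUnion.mpr ⟨C', hC', mem_filter.mpr ⟨hC, hle⟩⟩
    have hcard : #Fε ≤ #Min * ⌈Real.logb 2 ψ⁻¹⌉₊ := (card_le_card hcover).trans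
      (card_biUnion_le_card_mul Min _ _ fun C' _ => fibre_card_le C')
    rw [mul_comm]
    exact_mod_cast hcard

/-- In the hierarchy of feasible cells (ordered by containment, with side
lengths `s` halving along strict containments, all sides of cells of `Fε` in `[2ψ, 1]`,
and the cells containing any fixed cell forming a chain):
(a) each `C ∈ Fε ⊆ Fall` contains an `ε`-minimal cell (a minimal element of `Fall`);
(b) each `ε`-minimal cell is contained in at most `⌈log₂(1/ψ)⌉` cells of `Fε`;
consequently, if a family `Min` of `ε`-minimal cells covers `Fε` from below,
then `|Fε| ≤ ⌈log₂(1/ψ)⌉ · |Min|`. -/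
theorem stmt3 {α : Type*} [PartialOrder α] [DecidableEq α] [DecidableRel ((· ≤ ·) : α → α → Prop)] (s : α → ℝ) (ψ : ℝ)
    (hψ : 0 < ψ) (hψ1 : ψ ≤ 1)
    (Fall Fε : Finset α) (hsub : Fε ⊆ Fall)
    (hside : ∀ C ∈ Fε, 2 * ψ ≤ s C ∧ s C ≤ 1)
    (hhalf : ∀ C C' : α, C < C' → 2 * s C ≤ s C')
    (hchain : ∀ C' : α, IsChain (· ≤ ·) {C : α | C ∈ Fε ∧ C' ≤ C}) :
    (∀ C ∈ Fε, ∃ C' ∈ Fall, (∀ D ∈ Fall, D ≤ C' → D = C') ∧ C' ≤ C) ∧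
    (∀ C' ∈ Fall, (∀ D ∈ Fall, D ≤ C' → D = C') →
      ((Fε.filter (fun C => C' ≤ C)).card : ℝ) ≤ ⌈Real.logb 2 ψ⁻¹⌉₊) ∧
    (∀ Min : Finset α,
      (∀ C' ∈ Min, C' ∈ Fall ∧ ∀ D ∈ Fall, D ≤ C' → D = C') →
      (∀ C ∈ Fε, ∃ C' ∈ Min, C' ≤ C) →
      (Fε.card : ℝ) ≤ (⌈Real.logb 2 ψ⁻¹⌉₊ : ℝ) * Min.card) :=
  stmt3_general s ψ hψ Fall Fε hsub hside hhalf hchain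
end

section
/- In the high-low example with discretization $\Xi(\psi)$ (payments that are integer multiples of $\psi$), the discretization error is at most $3\psi$: $\sup_{x\in X} U(x) - \sup_{x\in\Xi(\psi)} U(x) \le 3\psi$, where $U(x) = S(p)(v-p) - x(\mathrm{low})$ with $p = x(\mathrm{high})-x(\mathrm{low})$ and $S$ non-decreasing. -/
/-- In the high-low example, the discretization error of the mesh of
contracts with payments that are integer multiples of `ψ` is at most `3ψ`: for every
bounded monotone contract `(a, h)` (paying `a` for low and `h` for high, `0 ≤ a ≤ h ≤ 1`)
there is such a contract on the mesh whose utility `S(h − a)(v − (h − a)) − a` is smaller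
by at most `3ψ`. -/
theorem stmt10 (S : ℝ → ℝ) (v ψ : ℝ)
    (hS : ∀ p ∈ Set.Icc (0 : ℝ) 1, S p ∈ Set.Icc (0 : ℝ) 1)
    (hmono : MonotoneOn S (Set.Icc (0 : ℝ) 1))
    (hv : v ∈ Set.Icc (0 : ℝ) 1) (hψ : 0 < ψ) :
    ∀ a h : ℝ, 0 ≤ a → a ≤ h → h ≤ 1 →
      ∃ a' h' : ℝ, 0 ≤ a' ∧ a' ≤ h' ∧ h' ≤ 1 ∧
        (∃ j : ℕ, a' = j * ψ) ∧ (∃ k : ℕ, h' = k * ψ) ∧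
        S (h - a) * (v - (h - a)) - a - 3 * ψ ≤ S (h' - a') * (v - (h' - a')) - a' := by
  intro a h ha hah h1
  obtain ⟨hv0, hv1⟩ := hv
  set p : ℝ := h - a with hp
  have hp0 : 0 ≤ p := by linarith
  have hp1 : p ≤ 1 := by linarith
  have hSp := hS p ⟨hp0, hp1⟩
  have hS0 := hS 0 ⟨le_refl 0, zero_le_one⟩
  by_cases hcase : v - p ≤ ψ
  · -- trivial contract (0,0)
    refine ⟨0, 0, le_refl 0, le_refl 0, zero_le_one, ⟨0, by simp⟩, ⟨0, by simp⟩, ?_⟩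
    have h1 : S p * (v - p) ≤ ψ := by
      rcases le_or_gt (v - p) 0 with hle | hlt
      · nlinarith [hSp.1, hSp.2]
      · nlinarith [hSp.1, hSp.2]
    have h2 : 0 ≤ S 0 * (v - 0) := by
      have := hS0.1; nlinarith
    simp only [sub_zero] at h2 ⊢
    nlinarith
  · push_neg at hcase
    have hvp : 0 ≤ v - p := by linarith
    by_cases hB : (⌈h / ψ⌉₊ : ℝ) * ψ ≤ 1
    · -- round h up, a down
      set h' : ℝ := (⌈h / ψ⌉₊ : ℝ) * ψ with hh'
      set a' : ℝ := (⌊a / ψ⌋₊ : ℝ) * ψ with ha'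
      have hha : h ≤ h' := by
        have := Nat.le_ceil (h / ψ)
        calc h = (h / ψ) * ψ := by field_simp
        _ ≤ h' := by exact mul_le_mul_of_nonneg_right this hψ.le
      have hh'ub : h' < h + ψ := by
        have := Nat.ceil_lt_add_one (div_nonneg (by linarith : (0:ℝ) ≤ h) hψ.le)
        have : h' < (h / ψ + 1) * ψ := by
          exact mul_lt_mul_of_pos_right this hψ
        calc h' < (h / ψ + 1) * ψ := this
        _ = h + ψ := by field_simp
      have haa : a' ≤ a := by
        have := Nat.floor_le (div_nonneg ha hψ.le)
        calc a' ≤ (a / ψ) * ψ := mul_le_mul_of_nonneg_right this hψ.le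
        _ = a := by field_simp
      have ha'lb : a - ψ < a' := by
        have := Nat.lt_floor_add_one (a / ψ)
        have h2 : a < a' + ψ := by
          have := mul_lt_mul_of_pos_right this hψ
          calc a = (a / ψ) * ψ := by field_simp
          _ < ((⌊a / ψ⌋₊ : ℝ) + 1) * ψ := this
          _ = a' + ψ := by ring
        linarith
      have ha'0 : 0 ≤ a' := by positivity
      set p' : ℝ := h' - a' with hp'
      have hpp' : p ≤ p' := by simp only [hp, hp']; linarith
      have hp'ub : p' ≤ p + 2 * ψ := by simp only [hp, hp']; linarith
      have hp'1 : p' ≤ 1 := by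
        have : a' ≤ a' := le_refl _
        simp only [hp']; linarith
      have hSp' := hS p' ⟨by linarith, hp'1⟩
      have hmon : S p ≤ S p' := hmono ⟨hp0, hp1⟩ ⟨by linarith, hp'1⟩ hpp'
      refine ⟨a', h', ha'0, by simp only [hp'] at hpp' ⊢; linarith, hB, ⟨_, rfl⟩, ⟨_, rfl⟩, ?_⟩
      have key : S p * (v - p) - a - 3 * ψ ≤ S p' * (v - p') - a' := by
        have e1 : S p * (v - p) ≤ S p' * (v - p) := mul_le_mul_of_nonneg_right hmon hvp
        have e2 : S p' * (p' - p) ≤ 1 * (p' - p) :=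
          mul_le_mul_of_nonneg_right hSp'.2 (by linarith)
        have e3 : S p' * (v - p') = S p' * (v - p) - S p' * (p' - p) := by ring
        linarith
      simpa [hp, hp'] using key
    · -- ceiling exceeds 1: round h down, and a down past the fractional loss
      push_neg at hB
      set h' : ℝ := (⌊h / ψ⌋₊ : ℝ) * ψ with hh'
      have hh'le : h' ≤ h := by
        have := Nat.floor_le (div_nonneg (by linarith : (0:ℝ) ≤ h) hψ.le)
        calc h' ≤ (h / ψ) * ψ := mul_le_mul_of_nonneg_right this hψ.le
        _ = h := by field_simp
      have hh'lb : h - ψ < h' := by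
        have := Nat.lt_floor_add_one (h / ψ)
        have h2 : h < h' + ψ := by
          have := mul_lt_mul_of_pos_right this hψ
          calc h = (h / ψ) * ψ := by field_simp
          _ < ((⌊h / ψ⌋₊ : ℝ) + 1) * ψ := this
          _ = h' + ψ := by ring
        linarith
      -- the fractional part
      set f : ℝ := h - h' with hf
      have hf0 : 0 ≤ f := by simp only [hf]; linarith
      have hfψ : f < ψ := by simp only [hf]; linarith
      -- claim: a ≥ f (otherwise p > 1 - ψ contradicting hcase)
      have hfa : f ≤ a := by
        by_contra hcon
        push_neg at hcon
        -- h' ≥ ⌈h/ψ⌉ψ - ψ > 1 - ψ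
        have hceil : (⌈h / ψ⌉₊ : ℝ) ≤ (⌊h / ψ⌋₊ : ℝ) + 1 := by
          exact_mod_cast Nat.ceil_le_floor_add_one (h / ψ)
        have hh'big : 1 - ψ < h' := by
          have := mul_le_mul_of_nonneg_right hceil hψ.le
          simp only [hh']; nlinarith
        have : 1 - ψ < p := by simp only [hp]; simp only [hf] at hcon; linarith
        linarith
      set a' : ℝ := (⌊(a - f) / ψ⌋₊ : ℝ) * ψ with ha'
      have haf0 : 0 ≤ a - f := by linarith
      have haa : a' ≤ a - f := by
        have := Nat.floor_le (show 0 ≤ (a - f) / ψ by positivity)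
        calc a' ≤ ((a - f) / ψ) * ψ := mul_le_mul_of_nonneg_right this hψ.le
        _ = a - f := by field_simp
      have ha'lb : a - f - ψ < a' := by
        have := Nat.lt_floor_add_one ((a - f) / ψ)
        have h2 : a - f < a' + ψ := by
          have := mul_lt_mul_of_pos_right this hψ
          calc a - f = ((a - f) / ψ) * ψ := by field_simp
          _ < ((⌊(a - f) / ψ⌋₊ : ℝ) + 1) * ψ := this
          _ = a' + ψ := by ring
        linarith
      have ha'0 : 0 ≤ a' := by positivity
      set p' : ℝ := h' - a' with hp'
      have hpp' : p ≤ p' := by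
        simp only [hp, hp']
        have : a' ≤ a - (h - h') := by simp only [hf] at haa; linarith
        linarith
      have hp'ub : p' ≤ p + ψ := by
        simp only [hp, hp', hf] at ha'lb ⊢; linarith
      have hp'1 : p' ≤ 1 := by simp only [hp']; linarith
      have hSp' := hS p' ⟨by linarith, hp'1⟩
      have hmon : S p ≤ S p' := hmono ⟨hp0, hp1⟩ ⟨by linarith, hp'1⟩ hpp'
      have ha'h' : a' ≤ h' := by
        have : a - f ≤ h' := by simp only [hf]; linarith
        linarith
      refine ⟨a', h', ha'0, ha'h', by linarith, ⟨_, rfl⟩, ⟨_, rfl⟩, ?_⟩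
      have haa2 : a - a' ≤ 2 * ψ := by linarith
      have key : S p * (v - p) - a - 3 * ψ ≤ S p' * (v - p') - a' := by
        have e1 : S p * (v - p) ≤ S p' * (v - p) := mul_le_mul_of_nonneg_right hmon hvp
        have e2 : S p' * (p' - p) ≤ 1 * (p' - p) :=
          mul_le_mul_of_nonneg_right hSp'.2 (by linarith)
        have e3 : S p' * (v - p') = S p' * (v - p) - S p' * (p' - p) := by ring
        linarith
      simpa [hp, hp'] using key
end
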